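/- arXiv:1806.10803 — 3 statements merged into one kernel-verified Lean document; each statement's English description precedes it below -/
import Mathlib

section
/- Let 0 < p ≤ q ≤ 1, let s be a positive integer, and let σ ∈ ℝ^N be a vector with nonincreasing nonnegative entries σ_1 ≥ σ_2 ≥ ⋯ ≥ σ_N ≥ 0. Partition the index set {r+1, ..., N} into consecutive blocks T_1, T_2, ..., T_J each of size s (the last possibly smaller). Then ∑_{j≥2} ‖σ_{T_j}‖_2^q ≤ s^{-(1/p - 1/2)q} (∑_{i=r+1}^{N} σ_i^p)^{q/p}. -/
/-!
Every entry of a full block `T_{j-1}` dominates every entry of `T_j`, so each `σ_i ^ p` with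
`i ∈ T_j` is at most the mean `‖σ_{T_{j-1}}‖_p^p / s`. Summing `σ_i ^ 2 = (σ_i ^ p) ^ (2 / p)` over
the at most `s` indices of `T_j` gives `‖σ_{T_j}‖_2^q ≤ s^{-(1/p - 1/2) q} ‖σ_{T_{j-1}}‖_p^q`.
Summing over `j ≥ 2`, superadditivity of `x ↦ x ^ (q / p)` (as `q / p ≥ 1`) and disjointness
of the blocks bound the right-hand sides by `s^{-(1/p - 1/2) q} ‖σ_{≥ r}‖_p^q`.
-/

open Finset Function

theorem Real.sum_rpow_le_rpow_sum {ι : Type*} (s : Finset ι) {f : ι → ℝ}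
    (hf : ∀ i ∈ s, 0 ≤ f i) {t : ℝ} (ht : 1 ≤ t) :
    ∑ i ∈ s, f i ^ t ≤ (∑ i ∈ s, f i) ^ t := by
  classical
  induction s using Finset.induction_on with
  | empty => simp [Real.zero_rpow (by linarith : t ≠ 0)]
  | insert a s ha ih =>
    rw [sum_insert ha, sum_insert ha]
    have hfs : ∀ i ∈ s, 0 ≤ f i := fun i hi => hf i (mem_insert_of_mem hi)
    calc f a ^ t + ∑ i ∈ s, f i ^ t ≤ f a ^ t + (∑ i ∈ s, f i) ^ t := by gcongr; exact ih hfs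
      _ ≤ (f a + ∑ i ∈ s, f i) ^ t :=
        Real.add_rpow_le_rpow_add (hf a (mem_insert_self a s)) (sum_nonneg hfs) ht

theorem rpow_sum_sq_le_of_forall_le {ι : Type*} {A B : Finset ι} {f : ι → ℝ} {s : ℕ} {p q : ℝ}
    (hp : 0 < p) (hq : 0 ≤ q) (hf : ∀ b ∈ B, 0 ≤ f b) (hle : ∀ a ∈ A, ∀ b ∈ B, f b ≤ f a)
    (hB : B.Nonempty) (hBs : #B ≤ s) (hsA : s ≤ #A) :
    (∑ b ∈ B, f b ^ (2 : ℝ)) ^ (q / 2)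
      ≤ (s : ℝ) ^ (-((1 / p - 1 / 2) * q)) * (∑ a ∈ A, f a ^ p) ^ (q / p) := by
  obtain ⟨b₀, hb₀⟩ := hB
  have hs : (0 : ℝ) < s := by exact_mod_cast (card_pos.2 ⟨b₀, hb₀⟩).trans_le hBs
  set M := ∑ a ∈ A, f a ^ p
  have hM : 0 ≤ M := sum_nonneg fun a ha => Real.rpow_nonneg ((hf b₀ hb₀).trans (hle a ha b₀ hb₀)) p
  have hmean : ∀ b ∈ B, f b ^ p ≤ M / s := by
    intro b hb
    rw [le_div_iff₀' hs]
    calc (s : ℝ) * f b ^ p ≤ #A • f b ^ p := by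
          rw [nsmul_eq_mul]; gcongr; exact Real.rpow_nonneg (hf b hb) p
      _ ≤ M := card_nsmul_le_sum _ _ _ fun a ha => Real.rpow_le_rpow (hf b hb) (hle a ha b hb) hp.le
  have hsq : ∀ b ∈ B, f b ^ (2 : ℝ) ≤ (M / s) ^ (2 / p) := by
    intro b hb
    rw [show f b ^ (2 : ℝ) = (f b ^ p) ^ (2 / p) by
      rw [← Real.rpow_mul (hf b hb), mul_div_cancel₀ _ hp.ne']]
    exact Real.rpow_le_rpow (Real.rpow_nonneg (hf b hb) p) (hmean b hb) (by positivity)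
  calc (∑ b ∈ B, f b ^ (2 : ℝ)) ^ (q / 2)
      ≤ (#B * (M / s) ^ (2 / p)) ^ (q / 2) := by
        gcongr
        · exact sum_nonneg fun b hb => Real.rpow_nonneg (hf b hb) 2
        · rw [← nsmul_eq_mul]; exact sum_le_card_nsmul _ _ _ hsq
    _ ≤ (s * (M / s) ^ (2 / p)) ^ (q / 2) := by gcongr
    _ = (s : ℝ) ^ (-((1 / p - 1 / 2) * q)) * M ^ (q / p) := by
        have hMs : 0 ≤ M / s := div_nonneg hM hs.le
        rw [Real.mul_rpow hs.le (Real.rpow_nonneg hMs _), ← Real.rpow_mul hMs,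
          show 2 / p * (q / 2) = q / p by field_simp, Real.div_rpow hM hs.le,
          show -((1 / p - 1 / 2) * q) = q / 2 - q / p by ring, Real.rpow_sub hs]
        ring

/-- The paper's `T_j`; indices in `Fin N` are `0`-based. -/
def block (N r s j : ℕ) : Finset (Fin N) :=
  univ.filter fun i : Fin N => r + (j - 1) * s ≤ (i : ℕ) ∧ (i : ℕ) < r + j * s

theorem card_block_le (N r s j : ℕ) : #(block N r s j) ≤ s := by
  calc #(block N r s j) ≤ #(Ico (r + (j - 1) * s) (r + j * s)) :=
        card_le_card_of_injOn (↑) (fun i hi => by simpa [block] using hi) Fin.val_injective.injOn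
    _ ≤ s := by rw [Nat.card_Ico, Nat.sub_one_mul]; omega

theorem card_block_sub_one {N r s j : ℕ} (hj : 2 ≤ j) (hne : (block N r s j).Nonempty) :
    #(block N r s (j - 1)) = s := by
  obtain ⟨i, hi⟩ := hne
  have hN : r + (j - 1) * s < N := by
    simp only [block, mem_filter, mem_univ, true_and] at hi
    omega
  have hblock : block N r s (j - 1)
      = (Ico (r + (j - 1 - 1) * s) (r + (j - 1) * s)).attachFin
          fun m hm => (mem_Ico.1 hm).2.trans hN := by
    ext i
    simp [block]
  rw [hblock, card_attachFin, Nat.card_Ico, Nat.sub_one_mul (j - 1)]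
  have : s ≤ (j - 1) * s := Nat.le_mul_of_pos_left s (by omega)
  omega

theorem lt_of_mem_block_sub_one {N r s j : ℕ} {a b : Fin N} (ha : a ∈ block N r s (j - 1))
    (hb : b ∈ block N r s j) : a < b := by
  simp only [block, mem_filter, mem_univ, true_and] at ha hb
  exact Fin.lt_def.2 (by omega)

theorem pairwise_disjoint_block (N r s : ℕ) : Pairwise (Disjoint on block N r s) := by
  refine (pairwise_disjoint_on _).2 fun j k hjk => disjoint_left.2 fun i hij hik => ?_
  simp only [block, mem_filter, mem_univ, true_and] at hij hik
  have : j * s ≤ (k - 1) * s := Nat.mul_le_mul_right s (by omega)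
  omega

theorem sum_sum_block_le {N r s : ℕ} (J : Finset ℕ) {g : Fin N → ℝ} (hg : ∀ i, 0 ≤ g i) :
    ∑ j ∈ J, ∑ i ∈ block N r s j, g i ≤ ∑ i ∈ univ.filter (fun i : Fin N => r ≤ (i : ℕ)), g i := by
  rw [← sum_biUnion ((pairwise_disjoint_block N r s).set_pairwise _)]
  refine sum_le_sum_of_subset_of_nonneg (biUnion_subset.2 fun j _ i hi => ?_) fun i _ _ => hg i
  simp only [block, mem_filter, mem_univ, true_and] at hi ⊢
  omega

theorem rpow_sum_sq_block_le {N r s j : ℕ} {p q : ℝ} (hp : 0 < p) (hq : 0 < q) {σ : Fin N → ℝ}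
    (hnn : ∀ i, 0 ≤ σ i) (hmono : ∀ a b : Fin N, a ≤ b → σ b ≤ σ a) (hj : 2 ≤ j) :
    (∑ i ∈ block N r s j, σ i ^ (2 : ℝ)) ^ (q / 2)
      ≤ (s : ℝ) ^ (-((1 / p - 1 / 2) * q)) * (∑ i ∈ block N r s (j - 1), σ i ^ p) ^ (q / p) := by
  rcases (block N r s j).eq_empty_or_nonempty with hempty | hne
  · rw [hempty, sum_empty, Real.zero_rpow (by positivity)]
    exact mul_nonneg (Real.rpow_nonneg s.cast_nonneg _)
      (Real.rpow_nonneg (sum_nonneg fun i _ => Real.rpow_nonneg (hnn i) p) _)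
  · exact rpow_sum_sq_le_of_forall_le hp hq.le (fun i _ => hnn i)
      (fun a ha b hb => hmono a b (lt_of_mem_block_sub_one ha hb).le) hne
      (card_block_le N r s j) (card_block_sub_one hj hne).ge

theorem block_tail_bound_general (N r s : ℕ) (p q : ℝ)
    (hp : 0 < p) (hpq : p ≤ q)
    (σ : Fin N → ℝ) (hnn : ∀ i, 0 ≤ σ i)
    (hmono : ∀ i j : Fin N, i ≤ j → σ j ≤ σ i) :
    ∑ j ∈ Finset.Icc 2 N,
        (∑ i ∈ Finset.univ.filter
            (fun i : Fin N => r + (j - 1) * s ≤ (i : ℕ) ∧ (i : ℕ) < r + j * s),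
          (σ i) ^ (2 : ℝ)) ^ (q / 2)
      ≤ (s : ℝ) ^ (-((1 / p - 1 / 2) * q)) *
          (∑ i ∈ Finset.univ.filter (fun i : Fin N => r ≤ (i : ℕ)), (σ i) ^ p) ^ (q / p) := by
  change ∑ j ∈ Icc 2 N, (∑ i ∈ block N r s j, σ i ^ (2 : ℝ)) ^ (q / 2) ≤ _
  have hσp : ∀ i, 0 ≤ σ i ^ p := fun i => Real.rpow_nonneg (hnn i) p
  have hshift : Set.InjOn (· - 1) (Icc 2 N : Set ℕ) := fun j hj k hk h => by
    simp only [coe_Icc, Set.mem_Icc] at hj hk h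
    omega
  calc ∑ j ∈ Icc 2 N, (∑ i ∈ block N r s j, σ i ^ (2 : ℝ)) ^ (q / 2)
      ≤ ∑ j ∈ Icc 2 N, (s : ℝ) ^ (-((1 / p - 1 / 2) * q)) *
          (∑ i ∈ block N r s (j - 1), σ i ^ p) ^ (q / p) :=
        sum_le_sum fun j hj => rpow_sum_sq_block_le hp (hp.trans_le hpq) hnn hmono (mem_Icc.1 hj).1
    _ = (s : ℝ) ^ (-((1 / p - 1 / 2) * q)) *
          ∑ j ∈ (Icc 2 N).image (· - 1), (∑ i ∈ block N r s j, σ i ^ p) ^ (q / p) := by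
        rw [sum_image hshift, mul_sum]
    _ ≤ (s : ℝ) ^ (-((1 / p - 1 / 2) * q)) *
          (∑ j ∈ (Icc 2 N).image (· - 1), ∑ i ∈ block N r s j, σ i ^ p) ^ (q / p) := by
        gcongr
        exact Real.sum_rpow_le_rpow_sum _ (fun j _ => sum_nonneg fun i _ => hσp i)
          ((one_le_div hp).2 hpq)
    _ ≤ (s : ℝ) ^ (-((1 / p - 1 / 2) * q)) *
          (∑ i ∈ univ.filter (fun i : Fin N => r ≤ (i : ℕ)), σ i ^ p) ^ (q / p) := by
        refine mul_le_mul_of_nonneg_left ?_ (Real.rpow_nonneg s.cast_nonneg _)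
        exact Real.rpow_le_rpow (sum_nonneg fun j _ => sum_nonneg fun i _ => hσp i)
          (sum_sum_block_le _ hσp) (div_nonneg (hp.le.trans hpq) hp.le)

theorem block_tail_bound (N r s : ℕ) (hs : 0 < s) (p q : ℝ)
    (hp : 0 < p) (hpq : p ≤ q) (hq1 : q ≤ 1)
    (σ : Fin N → ℝ) (hnn : ∀ i, 0 ≤ σ i)
    (hmono : ∀ i j : Fin N, i ≤ j → σ j ≤ σ i) :
    ∑ j ∈ Finset.Icc 2 N,
        (∑ i ∈ Finset.univ.filter
            (fun i : Fin N => r + (j - 1) * s ≤ (i : ℕ) ∧ (i : ℕ) < r + j * s),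
          (σ i) ^ (2 : ℝ)) ^ (q / 2)
      ≤ (s : ℝ) ^ (-((1 / p - 1 / 2) * q)) *
          (∑ i ∈ Finset.univ.filter (fun i : Fin N => r ≤ (i : ℕ)), (σ i) ^ p) ^ (q / p) :=
  block_tail_bound_general N r s p q hp hpq σ hnn hmono
end

section
/- (RUB implies exact recovery, vector version) Let 0 < p ≤ q ≤ 1, let r and kr be positive integers with k > 1, and let A : ℝ^N → ℝ^L be a linear map. Suppose there exist constants C₁, C₂ > 0 with C₂/C₁ < k^{(1/p−1/2)q} such that C₁‖x‖_2^q ≤ ‖Ax‖_q^q / L ≤ C₂‖x‖_2^q for every (k+1)r-sparse vector x. Then every r-sparse vector x₀ is the unique minimizer of min ‖x‖_p^p subject to Ax = Ax₀. -/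
/-!
Put `h = x - x₀` and `T = supp x₀`. Minimality of `x` and the `p`-triangle inequality give the cone
condition `‖h_{Tᶜ}‖_p^p ≤ ‖h_T‖_p^p`. Split `Tᶜ` greedily into blocks `T₁, T₂, …` of `s = k r`
entries of decreasing magnitude. Every entry of `T_{j+1}` is at most the `p`-mean of `T_j`, so
`‖h_{T_{j+1}}‖_2 ≤ s^{1/2-1/p} ‖h_{T_j}‖_p`; the upper RUB bound on the blocks and the
`q`-subadditivity of `‖A ·‖_q^q` then bound `‖A h_{T ∪ T₁}‖_q^q = ‖A h_{(T ∪ T₁)ᶜ}‖_q^q` by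
`C₂ k^{-(1/p-1/2)q} ‖h_T‖_2^q`, using the cone condition and Hölder on `T`. Against the lower RUB
bound `C₁ ‖h_{T ∪ T₁}‖_2^q` this forces `h_T = 0`, and then `h = 0` by the cone condition.
-/

open Finset

theorem exists_subset_card_eq_forall_le {α β : Type*} [DecidableEq α] [LinearOrder β]
    (f : α → β) (T : Finset α) :
    ∀ n ≤ #T, ∃ B ⊆ T, #B = n ∧ ∀ i ∈ B, ∀ l ∈ T \ B, f l ≤ f i
  | 0, _ => ⟨∅, empty_subset T, card_empty, by simp⟩
  | n + 1, hn => by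
    obtain ⟨B, hBT, hB, hBtop⟩ := exists_subset_card_eq_forall_le f T n (by omega)
    have hne : (T \ B).Nonempty := by
      rw [← card_pos, card_sdiff_of_subset hBT]; omega
    obtain ⟨a, ha, hamax⟩ := exists_max_image (T \ B) f hne
    have haB : a ∉ B := (mem_sdiff.1 ha).2
    refine ⟨insert a B, insert_subset (mem_sdiff.1 ha).1 hBT,
      by rw [card_insert_of_notMem haB, hB], ?_⟩
    intro i hi l hl
    have hlB : l ∈ T \ B := by
      rw [mem_sdiff, mem_insert, not_or] at hl; exact mem_sdiff.2 ⟨hl.1, hl.2.2⟩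
    rcases mem_insert.1 hi with rfl | hiB
    · exact hamax l hlB
    · exact hBtop i hiB l hlB

theorem exists_subset_card_eq_min_forall_mul_le_sum {α : Type*} [DecidableEq α] (f : α → ℝ)
    (T : Finset α) (s : ℕ) :
    ∃ B ⊆ T, #B = min s #T ∧ ∀ i ∈ T \ B, s * f i ≤ ∑ l ∈ B, f l := by
  obtain ⟨B, hBT, hB, hBtop⟩ := exists_subset_card_eq_forall_le f T (min s #T) (min_le_right _ _)
  refine ⟨B, hBT, hB, fun i hi => ?_⟩
  have hBs : #B = s := by
    have : #B < #T := card_lt_card ⟨hBT, fun hTB => (mem_sdiff.1 hi).2 (hTB (mem_sdiff.1 hi).1)⟩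
    omega
  calc (s : ℝ) * f i = ∑ _l ∈ B, f i := by rw [sum_const, hBs, nsmul_eq_mul]
    _ ≤ ∑ l ∈ B, f l := sum_le_sum fun l hl => hBtop l hl i hi

theorem sq_eq_abs_rpow_rpow {p : ℝ} (hp : 0 < p) (x : ℝ) : x ^ 2 = (|x| ^ p) ^ (2 / p) := by
  rw [← Real.rpow_mul (abs_nonneg x), mul_div_cancel₀ _ hp.ne', ← sq_abs]
  norm_cast

theorem rpow_sum_sq_le_of_forall_mul_abs_rpow_le {ι : Type*} {B : Finset ι} {h : ι → ℝ} {s : ℕ}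
    {a p q : ℝ} (hs : 0 < s) (hp : 0 < p) (hq : 0 ≤ q) (ha : 0 ≤ a) (hB : #B ≤ s)
    (hdom : ∀ i ∈ B, s * |h i| ^ p ≤ a) :
    (∑ i ∈ B, h i ^ 2) ^ (q / 2) ≤ (s : ℝ) ^ (q / 2 - q / p) * a ^ (q / p) := by
  have hs' : (0 : ℝ) < s := Nat.cast_pos.2 hs
  have has : 0 ≤ a / s := div_nonneg ha hs'.le
  have hterm : ∀ i ∈ B, h i ^ 2 ≤ (a / s) ^ (2 / p) := fun i hi => by
    rw [sq_eq_abs_rpow_rpow hp]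
    refine Real.rpow_le_rpow (by positivity) ?_ (by positivity)
    rw [le_div_iff₀ hs', mul_comm]
    exact hdom i hi
  have hsum : ∑ i ∈ B, h i ^ 2 ≤ s * (a / s) ^ (2 / p) :=
    calc ∑ i ∈ B, h i ^ 2 ≤ #B * (a / s) ^ (2 / p) := by
          simpa using sum_le_sum hterm
      _ ≤ s * (a / s) ^ (2 / p) := by gcongr
  calc (∑ i ∈ B, h i ^ 2) ^ (q / 2) ≤ (s * (a / s) ^ (2 / p)) ^ (q / 2) := by
        gcongr
    _ = (s : ℝ) ^ (q / 2 - q / p) * a ^ (q / p) := by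
        rw [Real.mul_rpow hs'.le (by positivity), ← Real.rpow_mul has, Real.div_rpow ha hs'.le,
          Real.rpow_sub hs']
        field_simp

theorem sum_abs_rpow_rpow_le_card_rpow_mul_sum_sq {ι : Type*} (S : Finset ι) (h : ι → ℝ) {p : ℝ}
    (hp : 0 < p) (hp2 : p ≤ 2) :
    (∑ i ∈ S, |h i| ^ p) ^ (2 / p) ≤ (#S : ℝ) ^ (2 / p - 1) * ∑ i ∈ S, h i ^ 2 := by
  simpa only [← sq_eq_abs_rpow_rpow hp] using
    Real.rpow_sum_le_const_mul_sum_rpow_of_nonneg S ((one_le_div hp).2 hp2)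
      fun i _ => Real.rpow_nonneg (abs_nonneg (h i)) p

theorem sum_abs_add_rpow_le {ι : Type*} (S : Finset ι) (u v : ι → ℝ) {q : ℝ} (hq0 : 0 ≤ q)
    (hq1 : q ≤ 1) :
    ∑ j ∈ S, |u j + v j| ^ q ≤ ∑ j ∈ S, |u j| ^ q + ∑ j ∈ S, |v j| ^ q := by
  rw [← sum_add_distrib]
  refine sum_le_sum fun j _ => ?_
  calc |u j + v j| ^ q ≤ (|u j| + |v j|) ^ q := by gcongr; exact abs_add_le _ _
    _ ≤ |u j| ^ q + |v j| ^ q := Real.rpow_add_le_add_rpow (abs_nonneg _) (abs_nonneg _) hq0 hq1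

theorem card_indicator_ne_zero_le {ι : Type*} [Fintype ι] (S : Finset ι) (h : ι → ℝ) :
    #{i | (S : Set ι).indicator h i ≠ 0} ≤ #S :=
  card_le_card fun i hi => by
    simpa using Set.mem_of_indicator_ne_zero (mem_filter.1 hi).2

theorem sum_indicator_sq {ι : Type*} [Fintype ι] (S : Finset ι) (h : ι → ℝ) :
    ∑ i, (S : Set ι).indicator h i ^ 2 = ∑ i ∈ S, h i ^ 2 := by
  rw [← sum_indicator_subset _ (subset_univ S)]
  exact sum_congr rfl fun i _ => by by_cases hi : i ∈ S <;> simp [hi]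

theorem indicator_eq_indicator_add_indicator_sdiff {ι : Type*} [DecidableEq ι] {B U : Finset ι}
    (hBU : B ⊆ U) (h : ι → ℝ) :
    (U : Set ι).indicator h =
      (B : Set ι).indicator h + ((U \ B : Finset ι) : Set ι).indicator h := by
  ext i
  by_cases hB : i ∈ B
  · simp [hB, hBU hB]
  · by_cases hU : i ∈ U <;> simp [hB, hU]

/-- `B` plays the role of the block preceding `U`; the blocks of `U` are peeled off by induction. -/
theorem apply_indicator_le_of_forall_mul_le_sum {ι : Type*} [Fintype ι] [DecidableEq ι]
    {Q : (ι → ℝ) → ℝ} {C p q : ℝ} {s : ℕ} (hs : 0 < s) (hp : 0 < p) (hpq : p ≤ q) (hC : 0 ≤ C)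
    (hQ_add : ∀ x y, Q (x + y) ≤ Q x + Q y)
    (hQ_le : ∀ x : ι → ℝ, #{i | x i ≠ 0} ≤ s → Q x ≤ C * (∑ i, x i ^ 2) ^ (q / 2))
    (h : ι → ℝ) (U : Finset ι) :
    ∀ B : Finset ι, (∀ i ∈ U, s * |h i| ^ p ≤ ∑ l ∈ B, |h l| ^ p) →
      Q ((U : Set ι).indicator h) ≤
        C * (s : ℝ) ^ (q / 2 - q / p) * (∑ l ∈ B, |h l| ^ p + ∑ i ∈ U, |h i| ^ p) ^ (q / p) := by
  have hq : 0 < q := hp.trans_le hpq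
  induction U using Finset.strongInduction with
  | H U ih =>
  intro B hdom
  have hsum_nonneg : ∀ S : Finset ι, 0 ≤ ∑ i ∈ S, |h i| ^ p := fun S =>
    sum_nonneg fun i _ => by positivity
  rcases U.eq_empty_or_nonempty with rfl | hU
  · have h0 : Q 0 ≤ 0 := by
      simpa [Real.zero_rpow (div_pos hq two_pos).ne'] using hQ_le 0 (by simp)
    rw [coe_empty, Set.indicator_empty]
    exact h0.trans (by positivity)
  obtain ⟨B', hB'U, hB'card, hB'dom⟩ :=
    exists_subset_card_eq_min_forall_mul_le_sum (fun i => |h i| ^ p) U s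
  have hB'ne : B'.Nonempty := by
    rw [← card_pos, hB'card]; exact lt_min hs (card_pos.2 hU)
  have hrest := ih (U \ B') (sdiff_ssubset hB'U hB'ne) B' hB'dom
  have hblock : Q ((B' : Set ι).indicator h) ≤
      C * (s : ℝ) ^ (q / 2 - q / p) * (∑ l ∈ B, |h l| ^ p) ^ (q / p) := by
    refine (hQ_le _ ((card_indicator_ne_zero_le B' h).trans (hB'card ▸ min_le_left _ _))).trans ?_
    rw [sum_indicator_sq, mul_assoc]
    exact mul_le_mul_of_nonneg_left (rpow_sum_sq_le_of_forall_mul_abs_rpow_le hs hp hq.le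
      (hsum_nonneg B) (hB'card ▸ min_le_left _ _) fun i hi => hdom i (hB'U hi)) hC
  have hpow := Real.add_rpow_le_rpow_add (hsum_nonneg B) (hsum_nonneg U) ((one_le_div hp).2 hpq)
  calc Q ((U : Set ι).indicator h)
      ≤ Q ((B' : Set ι).indicator h) + Q (((U \ B' : Finset ι) : Set ι).indicator h) := by
        rw [indicator_eq_indicator_add_indicator_sdiff hB'U]; exact hQ_add _ _
    _ ≤ C * (s : ℝ) ^ (q / 2 - q / p) *
          ((∑ l ∈ B, |h l| ^ p) ^ (q / p) + (∑ i ∈ U, |h i| ^ p) ^ (q / p)) := by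
        rw [add_comm (∑ l ∈ B', _), sum_sdiff hB'U] at hrest
        linarith
    _ ≤ C * (s : ℝ) ^ (q / 2 - q / p) * (∑ l ∈ B, |h l| ^ p + ∑ i ∈ U, |h i| ^ p) ^ (q / p) := by
        gcongr

theorem sum_compl_abs_sub_rpow_le {ι : Type*} [Fintype ι] [DecidableEq ι] {p : ℝ} (hp : 0 < p)
    (hp1 : p ≤ 1) {x x₀ : ι → ℝ} {T : Finset ι} (hT : ∀ i ∉ T, x₀ i = 0)
    (hx : ∑ i, |x i| ^ p ≤ ∑ i, |x₀ i| ^ p) :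
    ∑ i ∈ Tᶜ, |(x - x₀) i| ^ p ≤ ∑ i ∈ T, |(x - x₀) i| ^ p := by
  have hoff : ∑ i ∈ Tᶜ, |(x - x₀) i| ^ p = ∑ i ∈ Tᶜ, |x i| ^ p :=
    sum_congr rfl fun i hi => by rw [Pi.sub_apply, hT i (mem_compl.1 hi), sub_zero]
  have hx₀off : ∑ i ∈ Tᶜ, |x₀ i| ^ p = 0 :=
    sum_eq_zero fun i hi => by rw [hT i (mem_compl.1 hi), abs_zero, Real.zero_rpow hp.ne']
  have hon : ∑ i ∈ T, |x₀ i| ^ p ≤ ∑ i ∈ T, |x i| ^ p + ∑ i ∈ T, |(x - x₀) i| ^ p := by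
    rw [← sum_add_distrib]
    refine sum_le_sum fun i _ => ?_
    calc |x₀ i| ^ p ≤ (|x i| + |(x - x₀) i|) ^ p := by
          gcongr
          simpa using abs_sub (x i) (x i - x₀ i)
      _ ≤ |x i| ^ p + |(x - x₀) i| ^ p :=
          Real.rpow_add_le_add_rpow (abs_nonneg _) (abs_nonneg _) hp.le hp1
  rw [← sum_add_sum_compl T, ← sum_add_sum_compl T (fun i => |x₀ i| ^ p)] at hx
  linarith

theorem eq_zero_of_cone_of_eq_zero_on {ι : Type*} [Fintype ι] [DecidableEq ι] {p : ℝ} (hp : 0 < p)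
    {h : ι → ℝ} {T : Finset ι} (hT : ∀ i ∈ T, h i = 0)
    (hcone : ∑ i ∈ Tᶜ, |h i| ^ p ≤ ∑ i ∈ T, |h i| ^ p) : h = 0 := by
  have hT' : ∑ i ∈ T, |h i| ^ p = 0 :=
    sum_eq_zero fun i hi => by rw [hT i hi, abs_zero, Real.zero_rpow hp.ne']
  have hTc : ∑ i ∈ Tᶜ, |h i| ^ p = 0 :=
    le_antisymm (hT' ▸ hcone) (sum_nonneg fun i _ => by positivity)
  ext i
  by_cases hi : i ∈ T
  · exact hT i hi
  · have := (sum_eq_zero_iff_of_nonneg fun i _ => by positivity).1 hTc i (mem_compl.2 hi)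
    simpa [Real.rpow_eq_zero (abs_nonneg _) hp.ne'] using this

def IsRUB {ι κ : Type*} [Fintype ι] [Fintype κ] (A : (ι → ℝ) →ₗ[ℝ] (κ → ℝ)) (L : ℕ)
    (q C₁ C₂ : ℝ) (n : ℕ) : Prop :=
  ∀ x : ι → ℝ, #{i | x i ≠ 0} ≤ n →
    C₁ * (∑ i, x i ^ 2) ^ (q / 2) ≤ (∑ j, |A x j| ^ q) / L ∧
      (∑ j, |A x j| ^ q) / L ≤ C₂ * (∑ i, x i ^ 2) ^ (q / 2)

theorem rpow_mul_mul_rpow_eq_div_rpow {k p q E : ℝ} {r s : ℕ} (hr : 0 < r) (hk : 0 < k)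
    (hs : (s : ℝ) = k * r) (hE : 0 ≤ E) :
    (s : ℝ) ^ (q / 2 - q / p) * ((r : ℝ) ^ (2 / p - 1) * E) ^ (q / 2)
      = E ^ (q / 2) / k ^ ((1 / p - 1 / 2) * q) := by
  have hr' : (0 : ℝ) < r := Nat.cast_pos.2 hr
  have hr_cancel : (r : ℝ) ^ (q / 2 - q / p) * (r : ℝ) ^ ((2 / p - 1) * (q / 2)) = 1 := by
    rw [← Real.rpow_add hr']; ring_nf; exact Real.rpow_zero _
  rw [div_eq_mul_inv (E ^ (q / 2)), ← Real.rpow_neg hk.le,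
    show -((1 / p - 1 / 2) * q) = q / 2 - q / p by ring, hs, Real.mul_rpow hk.le hr'.le,
    Real.mul_rpow (by positivity) hE, ← Real.rpow_mul hr'.le]
  linear_combination (k ^ (q / 2 - q / p) * E ^ (q / 2)) * hr_cancel

theorem IsRUB.rpow_sum_sq_le_of_cone {ι κ : Type*} [Fintype ι] [Fintype κ] [DecidableEq ι]
    {A : (ι → ℝ) →ₗ[ℝ] (κ → ℝ)} {L r s : ℕ} {k p q C₁ C₂ : ℝ}
    (hA : IsRUB A L q C₁ C₂ (s + r)) (hr : 0 < r) (hk : 0 < k) (hs : (s : ℝ) = k * r)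
    (hp : 0 < p) (hpq : p ≤ q) (hq1 : q ≤ 1) (hC₁ : 0 ≤ C₁) (hC₂ : 0 ≤ C₂)
    {h : ι → ℝ} (hh : A h = 0) {T : Finset ι} (hT : #T ≤ r)
    (hcone : ∑ i ∈ Tᶜ, |h i| ^ p ≤ ∑ i ∈ T, |h i| ^ p) :
    C₁ * (∑ i ∈ T, h i ^ 2) ^ (q / 2) ≤
      C₂ / k ^ ((1 / p - 1 / 2) * q) * (∑ i ∈ T, h i ^ 2) ^ (q / 2) := by
  have hq : 0 < q := hp.trans_le hpq
  have hs0 : 0 < s := by exact_mod_cast (show (0 : ℝ) < s by rw [hs]; positivity)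
  have hE : 0 ≤ ∑ i ∈ T, h i ^ 2 := sum_nonneg fun i _ => sq_nonneg _
  obtain ⟨T₁, hT₁, hT₁card, hT₁dom⟩ :=
    exists_subset_card_eq_min_forall_mul_le_sum (fun i => |h i| ^ p) Tᶜ s
  set U := Tᶜ \ T₁
  set Q : (ι → ℝ) → ℝ := fun x => (∑ j, |A x j| ^ q) / L
  have hQ_add : ∀ x y, Q (x + y) ≤ Q x + Q y := fun x y => by
    simp only [Q, map_add, Pi.add_apply, ← add_div]
    gcongr
    exact sum_abs_add_rpow_le _ _ _ hq.le hq1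
  have htail : Q ((U : Set ι).indicator h) ≤
      C₂ * (s : ℝ) ^ (q / 2 - q / p) * (∑ i ∈ Tᶜ, |h i| ^ p) ^ (q / p) := by
    have := apply_indicator_le_of_forall_mul_le_sum hs0 hp hpq hC₂ hQ_add
      (fun x hx => (hA x (hx.trans le_self_add)).2) h U T₁ hT₁dom
    rwa [add_comm, sum_sdiff hT₁] at this
  have hhead : (∑ i ∈ Tᶜ, |h i| ^ p) ^ (q / p) ≤
      ((r : ℝ) ^ (2 / p - 1) * ∑ i ∈ T, h i ^ 2) ^ (q / 2) :=
    calc (∑ i ∈ Tᶜ, |h i| ^ p) ^ (q / p) ≤ (∑ i ∈ T, |h i| ^ p) ^ (q / p) := by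
          gcongr
      _ = ((∑ i ∈ T, |h i| ^ p) ^ (2 / p)) ^ (q / 2) := by
          rw [← Real.rpow_mul (sum_nonneg fun i _ => by positivity)]
          congr 1
          field_simp
      _ ≤ ((#T : ℝ) ^ (2 / p - 1) * ∑ i ∈ T, h i ^ 2) ^ (q / 2) := by
          gcongr
          exact sum_abs_rpow_rpow_le_card_rpow_mul_sum_sq T h hp (by linarith)
      _ ≤ ((r : ℝ) ^ (2 / p - 1) * ∑ i ∈ T, h i ^ 2) ^ (q / 2) := by
          have : 0 ≤ 2 / p - 1 := by rw [sub_nonneg, le_div_iff₀ hp]; linarith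
          gcongr
  have hsplit : ((T ∪ T₁ : Finset ι) : Set ι).indicator h + (U : Set ι).indicator h = h := by
    ext i
    by_cases hiT : i ∈ T <;> by_cases hiT₁ : i ∈ T₁ <;> simp [U, hiT, hiT₁]
  have hlower : C₁ * (∑ i ∈ T ∪ T₁, h i ^ 2) ^ (q / 2) ≤ Q ((U : Set ι).indicator h) := by
    have hsparse : #{i | ((T ∪ T₁ : Finset ι) : Set ι).indicator h i ≠ 0} ≤ s + r :=
      calc _ ≤ #(T ∪ T₁) := card_indicator_ne_zero_le _ h
        _ ≤ #T + #T₁ := card_union_le _ _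
        _ ≤ s + r := by have := min_le_left s #Tᶜ; omega
    have hAU :
        A ((U : Set ι).indicator h) = -A (((T ∪ T₁ : Finset ι) : Set ι).indicator h) := by
      rw [eq_neg_iff_add_eq_zero, add_comm, ← map_add, hsplit, hh]
    have := (hA _ hsparse).1
    rw [sum_indicator_sq] at this
    simpa only [Q, hAU, Pi.neg_apply, abs_neg] using this
  calc C₁ * (∑ i ∈ T, h i ^ 2) ^ (q / 2) ≤ C₁ * (∑ i ∈ T ∪ T₁, h i ^ 2) ^ (q / 2) := by
        gcongr
        exact subset_union_left
    _ ≤ C₂ * (s : ℝ) ^ (q / 2 - q / p) *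
          ((r : ℝ) ^ (2 / p - 1) * ∑ i ∈ T, h i ^ 2) ^ (q / 2) := by
        refine hlower.trans (htail.trans ?_)
        gcongr
    _ = C₂ / k ^ ((1 / p - 1 / 2) * q) * (∑ i ∈ T, h i ^ 2) ^ (q / 2) := by
        rw [mul_assoc, rpow_mul_mul_rpow_eq_div_rpow hr hk hs hE]
        ring

theorem IsRUB.eq_zero_of_cone {ι κ : Type*} [Fintype ι] [Fintype κ] [DecidableEq ι]
    {A : (ι → ℝ) →ₗ[ℝ] (κ → ℝ)} {L r s : ℕ} {k p q C₁ C₂ : ℝ}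
    (hA : IsRUB A L q C₁ C₂ (s + r)) (hr : 0 < r) (hk : 0 < k) (hs : (s : ℝ) = k * r)
    (hp : 0 < p) (hpq : p ≤ q) (hq1 : q ≤ 1) (hC₁ : 0 < C₁) (hC₂ : 0 ≤ C₂)
    (hratio : C₂ / C₁ < k ^ ((1 / p - 1 / 2) * q))
    {h : ι → ℝ} (hh : A h = 0) {T : Finset ι} (hT : #T ≤ r)
    (hcone : ∑ i ∈ Tᶜ, |h i| ^ p ≤ ∑ i ∈ T, |h i| ^ p) : h = 0 := by
  have hq2 : q / 2 ≠ 0 := by linarith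
  have hE : 0 ≤ ∑ i ∈ T, h i ^ 2 := sum_nonneg fun i _ => sq_nonneg _
  have hkey := hA.rpow_sum_sq_le_of_cone hr hk hs hp hpq hq1 hC₁.le hC₂ hh hT hcone
  have hC : C₂ / k ^ ((1 / p - 1 / 2) * q) < C₁ := by
    rw [div_lt_iff₀ hC₁] at hratio
    rwa [div_lt_iff₀ (by positivity), mul_comm]
  have hE0 : (∑ i ∈ T, h i ^ 2) ^ (q / 2) = 0 :=
    le_antisymm (by nlinarith [Real.rpow_nonneg hE (q / 2)]) (by positivity)
  rw [Real.rpow_eq_zero hE hq2, sum_eq_zero_iff_of_nonneg fun i _ => sq_nonneg _] at hE0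
  exact eq_zero_of_cone_of_eq_zero_on hp (fun i hi => pow_eq_zero_iff two_ne_zero |>.1 (hE0 i hi))
    hcone

theorem rub_exact_recovery_vector_general (N L r s : ℕ) (hr : 0 < r)
    (k : ℝ) (hk : 1 < k) (hs : (s : ℝ) = k * r)
    (p q C₁ C₂ : ℝ) (hp : 0 < p) (hpq : p ≤ q) (hq1 : q ≤ 1)
    (hC₁ : 0 < C₁) (hC₂ : 0 < C₂)
    (hratio : C₂ / C₁ < k ^ ((1 / p - 1 / 2) * q))
    (A : (Fin N → ℝ) →ₗ[ℝ] (Fin L → ℝ))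
    (hRUB : ∀ x : Fin N → ℝ,
      (Finset.univ.filter (fun i => x i ≠ 0)).card ≤ s + r →
        C₁ * ((∑ i, (x i) ^ 2) ^ (q / 2)) ≤ (∑ j, |A x j| ^ q) / L ∧
        (∑ j, |A x j| ^ q) / L ≤ C₂ * ((∑ i, (x i) ^ 2) ^ (q / 2))) :
    ∀ x₀ : Fin N → ℝ, (Finset.univ.filter (fun i => x₀ i ≠ 0)).card ≤ r →
      ∀ x : Fin N → ℝ, A x = A x₀ → ∑ i, |x i| ^ p ≤ ∑ i, |x₀ i| ^ p → x = x₀ := by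
  intro x₀ hx₀ x hAx hx
  have hA : IsRUB A L q C₁ C₂ (s + r) := hRUB
  have hcone := sum_compl_abs_sub_rpow_le hp (hpq.trans hq1) (T := {i | x₀ i ≠ 0})
    (fun i hi => by simpa using hi) hx
  exact sub_eq_zero.1 <| hA.eq_zero_of_cone hr (by linarith) hs hp hpq hq1 hC₁ hC₂.le hratio
    (by rw [map_sub, hAx, sub_self]) hx₀ hcone

theorem rub_exact_recovery_vector (N L r s : ℕ) (hr : 0 < r) (hL : 0 < L)
    (k : ℝ) (hk : 1 < k) (hs : (s : ℝ) = k * r)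
    (p q C₁ C₂ : ℝ) (hp : 0 < p) (hpq : p ≤ q) (hq1 : q ≤ 1)
    (hC₁ : 0 < C₁) (hC₂ : 0 < C₂)
    (hratio : C₂ / C₁ < k ^ ((1 / p - 1 / 2) * q))
    (A : (Fin N → ℝ) →ₗ[ℝ] (Fin L → ℝ))
    (hRUB : ∀ x : Fin N → ℝ,
      (Finset.univ.filter (fun i => x i ≠ 0)).card ≤ s + r →
        C₁ * ((∑ i, (x i) ^ 2) ^ (q / 2)) ≤ (∑ j, |A x j| ^ q) / L ∧
        (∑ j, |A x j| ^ q) / L ≤ C₂ * ((∑ i, (x i) ^ 2) ^ (q / 2))) :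
    ∀ x₀ : Fin N → ℝ, (Finset.univ.filter (fun i => x₀ i ≠ 0)).card ≤ r →
      ∀ x : Fin N → ℝ, A x = A x₀ → ∑ i, |x i| ^ p ≤ ∑ i, |x₀ i| ^ p → x = x₀ :=
  rub_exact_recovery_vector_general N L r s hr k hk hs p q C₁ C₂ hp hpq hq1 hC₁ hC₂ hratio A hRUB
end

section
/- (Null space nontriviality from RUB-type bound) Let 0 < p ≤ q ≤ 1, r a positive integer, s = kr with k > 1 an integer multiple condition (kr ∈ ℤ₊). Suppose R ∈ ℝ^{m×n} satisfies 𝒜(R) = 0 and ‖R_{−max(r)}‖_{S_p}^p ≤ ‖R_{max(r)}‖_{S_p}^p, where 𝒜 satisfies the ℓ_q-RUB of order r + s with constants C₁, C₂ and C₂/C₁ < (s/r)^{(1/p−1/2)q}. Then R = 0. -/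
open scoped BigOperators

/-- The descending rearrangement of a finite tuple of reals. -/
noncomputable def sortDesc {N : ℕ} (f : Fin N → ℝ) : Fin N → ℝ :=
  fun j => f (Tuple.sort f j.rev)

/-- The singular values of a real matrix, in nonincreasing order:
`singVal A j` is the `(j+1)`-st largest singular value of `A`. -/
noncomputable def singVal {m n : ℕ} (A : Matrix (Fin m) (Fin n) ℝ) : Fin n → ℝ :=
  sortDesc (fun i => Real.sqrt ((show (A.transpose * A).IsHermitian by
    rw [← Matrix.conjTranspose_eq_transpose_of_trivial]
    exact Matrix.isHermitian_conjTranspose_mul_self A).eigenvalues i))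

/-- `schattenP A p = ‖A‖_{S_p}^p`, the sum of the `p`-th powers of the singular values. -/
noncomputable def schattenP {m n : ℕ} (A : Matrix (Fin m) (Fin n) ℝ) (p : ℝ) : ℝ :=
  ∑ j, (singVal A j) ^ p

/-- `headP A r p = ‖A_{max(r)}‖_{S_p}^p`, the `S_p`-quasi-norm (to the `p`) of the best
rank-`r` approximation of `A`. -/
noncomputable def headP {m n : ℕ} (A : Matrix (Fin m) (Fin n) ℝ) (r : ℕ) (p : ℝ) : ℝ :=
  ∑ j ∈ Finset.univ.filter (fun j : Fin n => (j : ℕ) < r), (singVal A j) ^ p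

/-- `tailP A r p = ‖A_{-max(r)}‖_{S_p}^p`, the `S_p`-quasi-norm (to the `p`) of the error
of the best rank-`r` approximation of `A`. -/
noncomputable def tailP {m n : ℕ} (A : Matrix (Fin m) (Fin n) ℝ) (r : ℕ) (p : ℝ) : ℝ :=
  ∑ j ∈ Finset.univ.filter (fun j : Fin n => r ≤ (j : ℕ)), (singVal A j) ^ p

/-!
Compress `R` onto its right singular vectors with indices in the head block `[0, r + s)` and in
the shells `[r + js, r + (j + 1)s)`, `j ≥ 1`. The compressions have rank at most `r + s`, their
squared Frobenius norms are the corresponding sums of squared singular values, and they add up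
to `R`. As `𝒜 R = 0` and `‖·‖_q^q` is subadditive for `q ≤ 1`, the lower RUB bound of the head
is at most the sum of the upper RUB bounds of the shells. Each singular value in a shell is at
most the `ℓ_p`-mean of the previous shell, which bounds the shells by `‖R_{-max(r)}‖_{S_p}`; the
cone condition and Hölder's inequality bring this back to the head, and `R ≠ 0` would give
`C₁ ≤ C₂ (r/s)^{(1/p-1/2)q}`.
-/

open Matrix Finset

namespace Real

variable {ι : Type*}

theorem abs_sum_rpow_le_sum_abs_rpow (s : Finset ι) (g : ι → ℝ) {q : ℝ} (hq : 0 < q)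
    (hq1 : q ≤ 1) : |∑ i ∈ s, g i| ^ q ≤ ∑ i ∈ s, |g i| ^ q :=
  Finset.le_sum_of_subadditive (fun x => |x| ^ q) (by simp [zero_rpow hq.ne'])
    (fun x y => (rpow_le_rpow (abs_nonneg _) (abs_add_le x y) hq.le).trans
      (rpow_add_le_add_rpow (abs_nonneg x) (abs_nonneg y) hq.le hq1)) s g

theorem sum_rpow_le_rpow_sum_s13 (s : Finset ι) {g : ι → ℝ} (hg : ∀ i ∈ s, 0 ≤ g i) {t : ℝ}
    (ht : 1 ≤ t) : ∑ i ∈ s, g i ^ t ≤ (∑ i ∈ s, g i) ^ t := by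
  classical
  induction s using Finset.induction_on with
  | empty => simp [zero_rpow (by linarith : t ≠ 0)]
  | insert a s ha ih =>
    rw [sum_insert ha, sum_insert ha]
    have hs := forall_mem_insert .. |>.mp hg
    exact (add_le_add le_rfl (ih hs.2)).trans
      (add_rpow_le_rpow_add hs.1 (sum_nonneg hs.2) ht)

theorem sum_rpow_le_card_rpow_mul_rpow_sum (s : Finset ι) {g : ι → ℝ} (hg : ∀ i ∈ s, 0 ≤ g i)
    {u : ℝ} (hu : 0 < u) (hu1 : u ≤ 1) :
    ∑ i ∈ s, g i ^ u ≤ (#s : ℝ) ^ (1 - u) * (∑ i ∈ s, g i) ^ u := by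
  have hgu : ∀ i ∈ s, 0 ≤ g i ^ u := fun i hi => rpow_nonneg (hg i hi) u
  have hmean := rpow_sum_le_const_mul_sum_rpow_of_nonneg s (one_le_one_div hu hu1) hgu
  have hsum : ∑ i ∈ s, (g i ^ u) ^ (1 / u) = ∑ i ∈ s, g i :=
    sum_congr rfl fun i hi => by rw [← rpow_mul (hg i hi), mul_one_div_cancel hu.ne', rpow_one]
  rw [hsum] at hmean
  calc ∑ i ∈ s, g i ^ u = ((∑ i ∈ s, g i ^ u) ^ (1 / u)) ^ u := by
        rw [← rpow_mul (sum_nonneg hgu), one_div_mul_cancel hu.ne', rpow_one]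
    _ ≤ ((#s : ℝ) ^ (1 / u - 1) * ∑ i ∈ s, g i) ^ u :=
        rpow_le_rpow (rpow_nonneg (sum_nonneg hgu) _) hmean hu.le
    _ = (#s : ℝ) ^ (1 - u) * (∑ i ∈ s, g i) ^ u := by
        rw [mul_rpow (rpow_nonneg (Nat.cast_nonneg _) _) (sum_nonneg hg),
          ← rpow_mul (Nat.cast_nonneg _), sub_mul, one_div_mul_cancel hu.ne', one_mul]

end Real

theorem sum_rpow_le_mul_mean_rpow_of_forall_le {ι : Type*} {x : ι → ℝ} (hx : ∀ i, 0 ≤ x i)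
    {B B' : Finset ι} {s : ℕ} (hB : #B ≤ s) (hB' : #B' = s)
    (hle : ∀ i ∈ B, ∀ i' ∈ B', x i ≤ x i') {p a : ℝ} (hp : 0 < p) (ha : 0 ≤ a) :
    ∑ i ∈ B, x i ^ a ≤ s * ((∑ i ∈ B', x i ^ p) / s) ^ (a / p) := by
  rcases Nat.eq_zero_or_pos s with rfl | hs
  · simp [card_eq_zero.mp (Nat.le_zero.mp hB)]
  have hsR : (0 : ℝ) < s := Nat.cast_pos.mpr hs
  have hmean : ∀ i ∈ B, x i ^ p ≤ (∑ i' ∈ B', x i' ^ p) / s := fun i hi => by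
    rw [le_div_iff₀ hsR, mul_comm, ← hB', ← nsmul_eq_mul]
    exact card_nsmul_le_sum _ _ _ fun i' hi' => Real.rpow_le_rpow (hx i) (hle i hi i' hi') hp.le
  calc ∑ i ∈ B, x i ^ a = ∑ i ∈ B, (x i ^ p) ^ (a / p) := sum_congr rfl fun i _ => by
        rw [← Real.rpow_mul (hx i), mul_div_cancel₀ a hp.ne']
    _ ≤ ∑ _i ∈ B, ((∑ i' ∈ B', x i' ^ p) / s) ^ (a / p) := sum_le_sum fun i hi =>
        Real.rpow_le_rpow (Real.rpow_nonneg (hx i) p) (hmean i hi) (div_nonneg ha hp.le)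
    _ ≤ s * ((∑ i ∈ B', x i ^ p) / s) ^ (a / p) := by
        rw [sum_const, nsmul_eq_mul]
        gcongr
        exact Real.rpow_nonneg
          (div_nonneg (sum_nonneg fun i _ => Real.rpow_nonneg (hx i) p) hsR.le) _

section Shells

variable {n : ℕ} (r s : ℕ)

def shell (j : ℕ) : Finset (Fin n) := {k | r + j * s ≤ k ∧ k < r + j * s + s}

variable {r s}

theorem mem_shell {j : ℕ} {k : Fin n} :
    k ∈ shell r s j ↔ r + j * s ≤ k ∧ k < r + j * s + s := by
  simp [shell]

theorem mem_shell_iff_div (hs : 0 < s) {j : ℕ} {k : Fin n} :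
    k ∈ shell r s j ↔ r ≤ k ∧ (k - r) / s = j := by
  rw [mem_shell, Nat.div_eq_iff hs]
  omega

-- Since `k - r` truncates at `0`, the head `[0, r)` lies in the same fibre as the first shell.
theorem filter_div_eq_zero (hs : 0 < s) :
    univ.filter (fun k : Fin n => ((k : ℕ) - r) / s = 0) =
      univ.filter (fun k : Fin n => (k : ℕ) < r + s) := by
  ext k
  simp only [mem_filter, mem_univ, true_and, Nat.div_eq_zero_iff_lt hs]
  omega

theorem filter_div_eq_succ (hs : 0 < s) (j : ℕ) :
    univ.filter (fun k : Fin n => ((k : ℕ) - r) / s = j + 1) = shell r s (j + 1) := by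
  ext k
  simp only [mem_filter, mem_univ, true_and, mem_shell_iff_div hs]
  refine ⟨fun h => ⟨?_, h⟩, And.right⟩
  by_contra hk
  rw [Nat.sub_eq_zero_of_le (by omega), Nat.zero_div] at h
  omega

theorem card_shell_le (j : ℕ) : #(shell (n := n) r s j) ≤ s := by
  simpa using card_le_card_of_injOn (t := Ico (r + j * s) (r + j * s + s)) Fin.val
    (fun k hk => by simpa using mem_shell.mp hk) Fin.val_injective.injOn

theorem card_shell {j : ℕ} (h : r + j * s + s ≤ n) : #(shell (n := n) r s j) = s := by
  have : (shell (n := n) r s j).map Fin.valEmbedding = Ico (r + j * s) (r + j * s + s) := by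
    ext i
    simp only [mem_map, mem_shell, Fin.valEmbedding_apply, mem_Ico]
    exact ⟨fun ⟨k, hk, hki⟩ => hki ▸ hk, fun hi => ⟨⟨i, by omega⟩, hi, rfl⟩⟩
  simpa using congrArg card this

theorem sum_filter_le_eq_sum_shell {M : Type*} [AddCommMonoid M] (hs : 0 < s) (f : Fin n → M) :
    ∑ k ∈ univ.filter (fun k : Fin n => r ≤ (k : ℕ)), f k =
      ∑ j ∈ range n, ∑ k ∈ shell r s j, f k := by
  rw [← sum_fiberwise_of_maps_to (g := fun k : Fin n => (k - r) / s) (t := range n)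
    fun k _ => mem_range.mpr ((Nat.div_le_self _ _).trans_lt (by omega))]
  refine sum_congr rfl fun j _ => sum_congr ?_ fun _ _ => rfl
  ext k
  simp [mem_shell_iff_div hs]

theorem sum_shell_succ_rpow_le {σ : Fin n → ℝ} (hσ0 : ∀ k, 0 ≤ σ k) (hσ : Antitone σ) (j : ℕ)
    {p a : ℝ} (hp : 0 < p) (ha : 0 ≤ a) :
    ∑ k ∈ shell r s (j + 1), σ k ^ a ≤ s * ((∑ k ∈ shell r s j, σ k ^ p) / s) ^ (a / p) := by
  rcases (shell (n := n) r s (j + 1)).eq_empty_or_nonempty with h | ⟨k, hk⟩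
  · rw [h, sum_empty]
    exact mul_nonneg (Nat.cast_nonneg _) (Real.rpow_nonneg (div_nonneg
      (sum_nonneg fun k _ => Real.rpow_nonneg (hσ0 k) p) (Nat.cast_nonneg _)) _)
  have hk := mem_shell.mp hk
  rw [add_one_mul] at hk
  refine sum_rpow_le_mul_mean_rpow_of_forall_le hσ0 (card_shell_le _) (card_shell (by omega))
    (fun i hi i' hi' => hσ ?_) hp ha
  rw [mem_shell, add_one_mul] at hi
  have := mem_shell.mp hi'
  exact Fin.le_def.mpr (by omega)

theorem sum_shell_succ_le_tail {σ : Fin n → ℝ} (hσ0 : ∀ k, 0 ≤ σ k) (hσ : Antitone σ)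
    (hs : 0 < s) {p q : ℝ} (hp : 0 < p) (hpq : p ≤ q) :
    ∑ j ∈ range n, (∑ k ∈ shell r s (j + 1), σ k ^ (2 : ℝ)) ^ (q / 2) ≤
      (s : ℝ) ^ (q / 2) *
        ((∑ k ∈ univ.filter (fun k : Fin n => r ≤ (k : ℕ)), σ k ^ p) / s) ^ (q / p) := by
  set T : ℕ → ℝ := fun j => ∑ k ∈ shell r s j, σ k ^ p
  have hq : 0 < q := hp.trans_le hpq
  have hsR : (0 : ℝ) < s := Nat.cast_pos.mpr hs
  have hT : ∀ j, 0 ≤ T j / s := fun j =>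
    div_nonneg (sum_nonneg fun k _ => Real.rpow_nonneg (hσ0 k) p) hsR.le
  have hshell : ∀ j, (∑ k ∈ shell r s (j + 1), σ k ^ (2 : ℝ)) ^ (q / 2) ≤
      (s : ℝ) ^ (q / 2) * (T j / s) ^ (q / p) := fun j => by
    calc (∑ k ∈ shell r s (j + 1), σ k ^ (2 : ℝ)) ^ (q / 2)
        ≤ ((s : ℝ) * (T j / s) ^ (2 / p)) ^ (q / 2) :=
          Real.rpow_le_rpow (sum_nonneg fun k _ => Real.rpow_nonneg (hσ0 k) _)
            (sum_shell_succ_rpow_le hσ0 hσ j hp zero_le_two) (by positivity)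
      _ = (s : ℝ) ^ (q / 2) * (T j / s) ^ (q / p) := by
          rw [Real.mul_rpow hsR.le (Real.rpow_nonneg (hT j) _), ← Real.rpow_mul (hT j)]
          congr 2
          field_simp
  calc ∑ j ∈ range n, (∑ k ∈ shell r s (j + 1), σ k ^ (2 : ℝ)) ^ (q / 2)
      ≤ ∑ j ∈ range n, (s : ℝ) ^ (q / 2) * (T j / s) ^ (q / p) :=
        sum_le_sum fun j _ => hshell j
    _ ≤ (s : ℝ) ^ (q / 2) * (∑ j ∈ range n, T j / s) ^ (q / p) := by
        rw [← mul_sum]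
        gcongr
        exact Real.sum_rpow_le_rpow_sum_s13 _ (fun j _ => hT j) ((one_le_div hp).mpr hpq)
    _ = _ := by rw [← sum_div, sum_filter_le_eq_sum_shell hs]

theorem sum_filter_lt_rpow_le {σ : Fin n → ℝ} (hσ0 : ∀ k, 0 ≤ σ k) {p : ℝ} (hp : 0 < p)
    (hp2 : p ≤ 2) :
    ∑ k ∈ univ.filter (fun k : Fin n => (k : ℕ) < r), σ k ^ p ≤
      (r : ℝ) ^ (1 - p / 2) *
        (∑ k ∈ univ.filter (fun k : Fin n => (k : ℕ) < r), σ k ^ (2 : ℝ)) ^ (p / 2) := by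
  calc ∑ k ∈ univ.filter (fun k : Fin n => (k : ℕ) < r), σ k ^ p
      = ∑ k ∈ univ.filter (fun k : Fin n => (k : ℕ) < r), (σ k ^ (2 : ℝ)) ^ (p / 2) :=
        sum_congr rfl fun k _ => by
          rw [← Real.rpow_mul (hσ0 k), mul_div_cancel₀ p two_ne_zero]
    _ ≤ (#(univ.filter (fun k : Fin n => (k : ℕ) < r)) : ℝ) ^ (1 - p / 2) *
          (∑ k ∈ univ.filter (fun k : Fin n => (k : ℕ) < r), σ k ^ (2 : ℝ)) ^ (p / 2) :=
        Real.sum_rpow_le_card_rpow_mul_rpow_sum _ (fun k _ => Real.rpow_nonneg (hσ0 k) _)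
          (by positivity) (by linarith)
    _ ≤ _ := by
        gcongr
        · exact Real.rpow_nonneg (sum_nonneg fun k _ => Real.rpow_nonneg (hσ0 k) _) _
        · linarith
        · exact_mod_cast Fin.card_filter_val_lt.trans_le (min_le_right _ _)

theorem sum_shell_succ_le_head {σ : Fin n → ℝ} (hσ0 : ∀ k, 0 ≤ σ k) (hσ : Antitone σ)
    (hr : 0 < r) (hs : 0 < s) {p q : ℝ} (hp : 0 < p) (hpq : p ≤ q) (hp2 : p ≤ 2)
    (hcone : ∑ k ∈ univ.filter (fun k : Fin n => r ≤ (k : ℕ)), σ k ^ p ≤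
      ∑ k ∈ univ.filter (fun k : Fin n => (k : ℕ) < r), σ k ^ p) :
    ∑ j ∈ range n, (∑ k ∈ shell r s (j + 1), σ k ^ (2 : ℝ)) ^ (q / 2) ≤
      ((r : ℝ) / s) ^ ((1 / p - 1 / 2) * q) *
        (∑ k ∈ univ.filter (fun k : Fin n => (k : ℕ) < r), σ k ^ (2 : ℝ)) ^ (q / 2) := by
  set G := ∑ k ∈ univ.filter (fun k : Fin n => (k : ℕ) < r), σ k ^ (2 : ℝ)
  have hrR : (0 : ℝ) < r := Nat.cast_pos.mpr hr
  have hsR : (0 : ℝ) < s := Nat.cast_pos.mpr hs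
  have hq : 0 < q := hp.trans_le hpq
  have hG : 0 ≤ G := sum_nonneg fun k _ => Real.rpow_nonneg (hσ0 k) _
  calc _ ≤ (s : ℝ) ^ (q / 2) *
          ((∑ k ∈ univ.filter (fun k : Fin n => r ≤ (k : ℕ)), σ k ^ p) / s) ^ (q / p) :=
        sum_shell_succ_le_tail hσ0 hσ hs hp hpq
    _ ≤ (s : ℝ) ^ (q / 2) * ((r : ℝ) ^ (1 - p / 2) * G ^ (p / 2) / s) ^ (q / p) := by
        gcongr
        · exact div_nonneg (sum_nonneg fun k _ => Real.rpow_nonneg (hσ0 k) p) hsR.le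
        · exact hcone.trans (sum_filter_lt_rpow_le hσ0 hp hp2)
    _ = ((r : ℝ) / s) ^ ((1 / p - 1 / 2) * q) * G ^ (q / 2) := by
        rw [Real.div_rpow (by positivity) hsR.le, Real.mul_rpow (by positivity) (by positivity),
          ← Real.rpow_mul hrR.le, ← Real.rpow_mul hG, Real.div_rpow hrR.le hsR.le,
          show (1 / p - 1 / 2) * q = q / p - q / 2 by ring, Real.rpow_sub hrR,
          Real.rpow_sub hsR, show (1 - p / 2) * (q / p) = q / p - q / 2 by field_simp,
          Real.rpow_sub hrR,
          show p / 2 * (q / p) = q / 2 by field_simp]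
        field_simp

end Shells

section SingularValues

variable {m n : ℕ} (A : Matrix (Fin m) (Fin n) ℝ)

/-- Sends the position of a singular value in nonincreasing order to the index of the
corresponding eigenvalue of `Aᴴ * A`. -/
noncomputable def eigPerm : Fin n ≃ Fin n :=
  Fin.revPerm.trans
    (Tuple.sort fun i => √((isHermitian_conjTranspose_mul_self A).eigenvalues i))

theorem singVal_eq_sqrt (k : Fin n) :
    singVal A k = √((isHermitian_conjTranspose_mul_self A).eigenvalues (eigPerm A k)) := rfl

theorem singVal_nonneg (k : Fin n) : 0 ≤ singVal A k := Real.sqrt_nonneg _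

theorem singVal_antitone : Antitone (singVal A) := fun _ _ h =>
  Tuple.monotone_sort (fun i => √((isHermitian_conjTranspose_mul_self A).eigenvalues i))
    (Fin.rev_le_rev.mpr h)

theorem singVal_rpow_two (k : Fin n) :
    singVal A k ^ (2 : ℝ) = (isHermitian_conjTranspose_mul_self A).eigenvalues (eigPerm A k) := by
  rw [singVal_eq_sqrt, Real.rpow_two, Real.sq_sqrt
    ((posSemidef_conjTranspose_mul_self A).eigenvalues_nonneg _)]

theorem sum_singVal_rpow_two : ∑ k, singVal A k ^ (2 : ℝ) = (Aᴴ * A).trace := by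
  simp only [singVal_rpow_two, Equiv.sum_comp (eigPerm A)
    (isHermitian_conjTranspose_mul_self A).eigenvalues,
    (isHermitian_conjTranspose_mul_self A).trace_eq_sum_eigenvalues, RCLike.ofReal_real_eq_id,
    id]

theorem exists_singVal_ne_zero (hA : A ≠ 0) : ∃ k, singVal A k ≠ 0 := by
  by_contra! h
  refine hA (trace_conjTranspose_mul_self_eq_zero_iff.mp ?_)
  rw [← sum_singVal_rpow_two]
  simp [h]

theorem sum_filter_lt_singVal_rpow_two_pos (hA : A ≠ 0) {N : ℕ} (hN : 0 < N) :
    0 < ∑ k ∈ univ.filter (fun k : Fin n => (k : ℕ) < N), singVal A k ^ (2 : ℝ) := by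
  obtain ⟨j, hj⟩ := exists_singVal_ne_zero A hA
  have h0 : 0 < singVal A ⟨0, j.pos⟩ :=
    ((singVal_nonneg A j).lt_of_ne' hj).trans_le
      (singVal_antitone A (show (⟨0, j.pos⟩ : Fin n) ≤ j from Nat.zero_le _))
  exact (Real.rpow_pos_of_pos h0 _).trans_le <| single_le_sum
    (fun k _ => Real.rpow_nonneg (singVal_nonneg A k) _) (by simpa using hN)

end SingularValues

theorem Matrix.trace_conjStarAlgAut {k 𝕜 : Type*} [Fintype k] [DecidableEq k] [CommRing 𝕜]
    [StarRing 𝕜] (u : unitary (Matrix k k 𝕜)) (X : Matrix k k 𝕜) :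
    (Unitary.conjStarAlgAut 𝕜 _ u X).trace = X.trace := by
  rw [Unitary.conjStarAlgAut_apply, trace_mul_cycle, Unitary.coe_star_mul_self, one_mul]

section SingularBlocks

variable {m n : ℕ} (R : Matrix (Fin m) (Fin n) ℝ)

noncomputable def singProj (t : Finset (Fin n)) : Matrix (Fin n) (Fin n) ℝ :=
  Unitary.conjStarAlgAut ℝ _ (isHermitian_conjTranspose_mul_self R).eigenvectorUnitary
    (diagonal fun i => if (eigPerm R).symm i ∈ t then 1 else 0)

/-- The paper's `R_T`: `R` projected onto its right singular vectors whose positions in the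
nonincreasing order of singular values lie in `t`. -/
noncomputable def svdBlock (t : Finset (Fin n)) : Matrix (Fin m) (Fin n) ℝ :=
  R * singProj R t

theorem rank_svdBlock_le (t : Finset (Fin n)) : (svdBlock R t).rank ≤ #t := by
  classical
  rw [svdBlock, singProj, Unitary.conjStarAlgAut_apply]
  refine (rank_mul_le_right _ _).trans <| (rank_mul_le_left _ _).trans <|
    (rank_mul_le_right _ _).trans_eq ?_
  rw [rank_diagonal, Fintype.card_subtype]
  simp only [ne_eq, ite_eq_right_iff, one_ne_zero, imp_false, not_not]
  exact card_equiv (eigPerm R).symm fun i => by simp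

theorem sum_singVal_svdBlock_rpow_two (t : Finset (Fin n)) :
    ∑ k, singVal (svdBlock R t) k ^ (2 : ℝ) = ∑ k ∈ t, singVal R k ^ (2 : ℝ) := by
  classical
  set hH := isHermitian_conjTranspose_mul_self R
  set φ := Unitary.conjStarAlgAut ℝ (Matrix (Fin n) (Fin n) ℝ) hH.eigenvectorUnitary
  set D : Matrix (Fin n) (Fin n) ℝ := diagonal fun i => if (eigPerm R).symm i ∈ t then 1 else 0
  have hP : (singProj R t)ᴴ = singProj R t := by
    rw [← star_eq_conjTranspose, singProj, ← map_star, star_eq_conjTranspose,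
      diagonal_conjTranspose, star_trivial]
  have hRR : Rᴴ * R = φ (diagonal hH.eigenvalues) := by
    conv_lhs => rw [hH.spectral_theorem]
    rfl
  rw [sum_singVal_rpow_two, svdBlock, conjTranspose_mul, hP,
    show singProj R t * Rᴴ * (R * singProj R t) = φ D * (Rᴴ * R) * φ D by
      simp only [singProj, Matrix.mul_assoc]; rfl,
    hRR, ← map_mul, ← map_mul, trace_conjStarAlgAut, diagonal_mul_diagonal,
    diagonal_mul_diagonal, trace_diagonal, ← Equiv.sum_comp (eigPerm R)]
  simp only [Equiv.symm_apply_apply, ite_mul, one_mul, zero_mul, mul_ite, mul_one, mul_zero,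
    sum_ite_mem, univ_inter, inter_self]
  exact sum_congr rfl fun k _ => (singVal_rpow_two R k).symm

theorem sum_svdBlock_fiberwise {ι : Type*} [DecidableEq ι] (g : Fin n → ι) (I : Finset ι)
    (hg : ∀ k, g k ∈ I) : ∑ i ∈ I, svdBlock R {k | g k = i} = R := by
  have hD : ∑ i ∈ I, (diagonal fun j =>
      if (eigPerm R).symm j ∈ ({k | g k = i} : Finset (Fin n)) then (1 : ℝ) else 0) = 1 := by
    ext a b
    simp [Matrix.sum_apply, diagonal_apply, one_apply, hg]
  simp only [svdBlock]
  rw [← Matrix.mul_sum]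
  simp only [singProj]
  rw [← map_sum, hD, map_one, Matrix.mul_one]

end SingularBlocks

theorem rub_head_le_sum_shell {m n L r s : ℕ} {q C₁ C₂ : ℝ} (hq : 0 < q) (hq1 : q ≤ 1)
    (hs : 0 < s) (A : Matrix (Fin m) (Fin n) ℝ →ₗ[ℝ] (Fin L → ℝ))
    (hRUB : ∀ Z : Matrix (Fin m) (Fin n) ℝ, Z.rank ≤ r + s →
        C₁ * ((∑ j, (singVal Z j) ^ (2 : ℝ)) ^ (q / 2)) ≤ (∑ j, |A Z j| ^ q) / L ∧
        (∑ j, |A Z j| ^ q) / L ≤ C₂ * ((∑ j, (singVal Z j) ^ (2 : ℝ)) ^ (q / 2)))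
    {R : Matrix (Fin m) (Fin n) ℝ} (hker : A R = 0) :
    C₁ * (∑ k ∈ univ.filter (fun k : Fin n => (k : ℕ) < r + s), singVal R k ^ (2 : ℝ)) ^ (q / 2)
      ≤ C₂ * ∑ j ∈ range n, (∑ k ∈ shell r s (j + 1), singVal R k ^ (2 : ℝ)) ^ (q / 2) := by
  have hdecomp : svdBlock R (univ.filter (fun k : Fin n => (k : ℕ) < r + s)) +
      ∑ j ∈ range n, svdBlock R (shell r s (j + 1)) = R := by
    have := sum_svdBlock_fiberwise R (fun k : Fin n => ((k : ℕ) - r) / s) (range (n + 1))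
      fun k => mem_range.mpr (by have := Nat.div_le_self ((k : ℕ) - r) s; omega)
    rw [sum_range_succ', filter_div_eq_zero hs, add_comm] at this
    simpa only [filter_div_eq_succ hs] using this
  have hAH : A (svdBlock R (univ.filter (fun k : Fin n => (k : ℕ) < r + s))) =
      -∑ j ∈ range n, A (svdBlock R (shell r s (j + 1))) := by
    rw [← map_sum, eq_neg_iff_add_eq_zero, ← map_add, hdecomp, hker]
  have hlow := (hRUB _ ((rank_svdBlock_le R _).trans
    (Fin.card_filter_val_lt.trans_le (min_le_right _ _)))).1
  rw [sum_singVal_svdBlock_rpow_two] at hlow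
  have hup : ∀ j, (∑ l, |A (svdBlock R (shell r s (j + 1))) l| ^ q) / L ≤
      C₂ * (∑ k ∈ shell r s (j + 1), singVal R k ^ (2 : ℝ)) ^ (q / 2) := fun j => by
    rw [← sum_singVal_svdBlock_rpow_two]
    exact (hRUB _ ((rank_svdBlock_le R _).trans ((card_shell_le _).trans
      (Nat.le_add_left s r)))).2
  calc _ ≤ _ := hlow
    _ ≤ (∑ j ∈ range n, ∑ l, |A (svdBlock R (shell r s (j + 1))) l| ^ q) / L := by
        refine div_le_div_of_nonneg_right ?_ (Nat.cast_nonneg L)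
        simp only [hAH, Pi.neg_apply, abs_neg, Finset.sum_apply]
        exact (sum_le_sum fun l _ => Real.abs_sum_rpow_le_sum_abs_rpow _ _ hq hq1).trans_eq
          sum_comm
    _ ≤ C₂ * ∑ j ∈ range n, (∑ k ∈ shell r s (j + 1), singVal R k ^ (2 : ℝ)) ^ (q / 2) := by
        rw [sum_div, mul_sum]
        exact sum_le_sum fun j _ => hup j

theorem nullspace_trivial_from_rub_general (m n L r s kk : ℕ) (hr : 0 < r)
    (hkk : 1 < kk) (hs : s = kk * r)
    (p q C₁ C₂ : ℝ) (hp : 0 < p) (hpq : p ≤ q) (hq1 : q ≤ 1)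
    (hC₁ : 0 < C₁) (hC₂ : 0 < C₂)
    (hratio : C₂ / C₁ < ((s : ℝ) / r) ^ ((1 / p - 1 / 2) * q))
    (A : Matrix (Fin m) (Fin n) ℝ →ₗ[ℝ] (Fin L → ℝ))
    (hRUB : ∀ Z : Matrix (Fin m) (Fin n) ℝ, Z.rank ≤ r + s →
        C₁ * ((∑ j, (singVal Z j) ^ (2 : ℝ)) ^ (q / 2)) ≤ (∑ j, |A Z j| ^ q) / L ∧
        (∑ j, |A Z j| ^ q) / L ≤ C₂ * ((∑ j, (singVal Z j) ^ (2 : ℝ)) ^ (q / 2)))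
    (R : Matrix (Fin m) (Fin n) ℝ) (hker : A R = 0)
    (hcone : tailP R r p ≤ headP R r p) :
    R = 0 := by
  by_contra hR
  have hs0 : 0 < s := hs ▸ Nat.mul_pos (by omega) hr
  have hq : 0 < q := hp.trans_le hpq
  set F := ∑ k ∈ univ.filter (fun k : Fin n => (k : ℕ) < r + s), singVal R k ^ (2 : ℝ)
  have hF : 0 < F := sum_filter_lt_singVal_rpow_two_pos R hR (by omega)
  have key : C₁ * F ^ (q / 2) ≤ C₂ * ((r : ℝ) / s) ^ ((1 / p - 1 / 2) * q) * F ^ (q / 2) :=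
    calc C₁ * F ^ (q / 2)
        ≤ C₂ * ∑ j ∈ range n, (∑ k ∈ shell r s (j + 1), singVal R k ^ (2 : ℝ)) ^ (q / 2) :=
          rub_head_le_sum_shell hq hq1 hs0 A hRUB hker
      _ ≤ C₂ * (((r : ℝ) / s) ^ ((1 / p - 1 / 2) * q) *
            (∑ k ∈ univ.filter (fun k : Fin n => (k : ℕ) < r),
              singVal R k ^ (2 : ℝ)) ^ (q / 2)) :=
          mul_le_mul_of_nonneg_left (sum_shell_succ_le_head (singVal_nonneg R)
            (singVal_antitone R) hr hs0 hp hpq (by linarith) hcone) hC₂.le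
      _ ≤ C₂ * ((r : ℝ) / s) ^ ((1 / p - 1 / 2) * q) * F ^ (q / 2) := by
          rw [← mul_assoc]
          gcongr
          · exact sum_nonneg fun k _ => Real.rpow_nonneg (singVal_nonneg R k) _
          · exact sum_le_sum_of_subset_of_nonneg (monotone_filter_right _ fun k hk => by omega)
              fun k _ _ => Real.rpow_nonneg (singVal_nonneg R k) _
  have hC : C₁ ≤ C₂ * (((s : ℝ) / r) ^ ((1 / p - 1 / 2) * q))⁻¹ := by
    rw [← Real.inv_rpow (by positivity), inv_div]
    exact le_of_mul_le_mul_right key (Real.rpow_pos_of_pos hF _)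
  rw [← div_eq_mul_inv, le_div_iff₀ (by positivity)] at hC
  rw [div_lt_iff₀ hC₁] at hratio
  linarith

theorem nullspace_trivial_from_rub (m n L r s kk : ℕ) (hr : 0 < r) (hL : 0 < L)
    (hkk : 1 < kk) (hs : s = kk * r)
    (p q C₁ C₂ : ℝ) (hp : 0 < p) (hpq : p ≤ q) (hq1 : q ≤ 1)
    (hC₁ : 0 < C₁) (hC₂ : 0 < C₂)
    (hratio : C₂ / C₁ < ((s : ℝ) / r) ^ ((1 / p - 1 / 2) * q))
    (A : Matrix (Fin m) (Fin n) ℝ →ₗ[ℝ] (Fin L → ℝ))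
    (hRUB : ∀ Z : Matrix (Fin m) (Fin n) ℝ, Z.rank ≤ r + s →
        C₁ * ((∑ j, (singVal Z j) ^ (2 : ℝ)) ^ (q / 2)) ≤ (∑ j, |A Z j| ^ q) / L ∧
        (∑ j, |A Z j| ^ q) / L ≤ C₂ * ((∑ j, (singVal Z j) ^ (2 : ℝ)) ^ (q / 2)))
    (R : Matrix (Fin m) (Fin n) ℝ) (hker : A R = 0)
    (hcone : tailP R r p ≤ headP R r p) :
    R = 0 :=
  nullspace_trivial_from_rub_general m n L r s kk hr hkk hs p q C₁ C₂ hp hpq hq1 hC₁ hC₂ hratio A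
    hRUB R hker hcone
end
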